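/- arXiv:1101.0778 — 6 statements merged into one kernel-verified Lean document; each statement's English description precedes it below -/
import Mathlib

section
/- Let h : ℝⁿ → ℝ and X : ℝⁿ → ℝⁿ be C^∞, let Z = {x ∈ ℝⁿ : X(x) = 0}, and assume: (i) ⟨X(x), ∇h(x)⟩ < 0 for every x ∉ Z; (ii) there is an open set U ⊇ Z such that X(x) = −∇h(x) for all x ∈ U. Then there exists a C^∞ map g from ℝⁿ to the symmetric positive-definite n×n real matrices such that g(x) is the identity matrix for all x in some open neighborhood of Z, and g(x) · X(x) = −∇h(x) for every x ∈ ℝⁿ; equivalently, X = −grad_g h for the Riemannian metric on ℝⁿ defined by g. -/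
/-!
Take `g = 1 - X Xᵀ / ⟨X, X⟩ + b bᵀ / ⟨X, b⟩` with `b = -∇h`, the BFGS update of the identity
for the pair `(X, b)`. Then `g X = b`; completing the square in the quadratic form shows that
`g` is positive definite as soon as `⟨X, b⟩ > 0`, which is hypothesis (i) off `Z`; and `g = 1`
wherever `X = b`, in particular on `U`. Hence `g` is smooth: off `Z` it is a rational expression
with nonvanishing denominators, and near `Z` it is constant.
-/

open Matrix

@[fun_prop]
theorem ContDiff.dotProduct {E ι : Type*} [NormedAddCommGroup E] [NormedSpace ℝ E] [Fintype ι]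
    {k : WithTop ℕ∞} {f g : E → ι → ℝ} (hf : ContDiff ℝ k f) (hg : ContDiff ℝ k g) :
    ContDiff ℝ k fun x => f x ⬝ᵥ g x :=
  ContDiff.sum fun i _ => (contDiff_pi.mp hf i).mul (contDiff_pi.mp hg i)

namespace Matrix

theorem dotProduct_self_sub_sq_div {ι : Type*} [Fintype ι] {s v : ι → ℝ} (hs : s ≠ 0) :
    v ⬝ᵥ v - (s ⬝ᵥ v) ^ 2 / (s ⬝ᵥ s) =
      (v - ((s ⬝ᵥ v) / (s ⬝ᵥ s)) • s) ⬝ᵥ (v - ((s ⬝ᵥ v) / (s ⬝ᵥ s)) • s) := by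
  have hss : s ⬝ᵥ s ≠ 0 := dotProduct_self_eq_zero.not.mpr hs
  simp only [sub_dotProduct, dotProduct_sub, smul_dotProduct, dotProduct_smul, smul_eq_mul,
    dotProduct_comm v s]
  field_simp
  ring

variable {ι : Type*} [Fintype ι] [DecidableEq ι]

/-- At `s = y` the two rank-one terms cancel, so `secantMetric s s = 1` even for `s = 0`, where
both inverses are the junk value `0`. -/
noncomputable def secantMetric (s y : ι → ℝ) : Matrix ι ι ℝ :=
  1 - (s ⬝ᵥ s)⁻¹ • vecMulVec s s + (s ⬝ᵥ y)⁻¹ • vecMulVec y y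

@[simp]
theorem secantMetric_self (s : ι → ℝ) : secantMetric s s = 1 := by
  simp [secantMetric]

theorem secantMetric_apply (s y : ι → ℝ) (i j : ι) :
    secantMetric s y i j =
      (1 : Matrix ι ι ℝ) i j - (s ⬝ᵥ s)⁻¹ * (s i * s j) + (s ⬝ᵥ y)⁻¹ * (y i * y j) := by
  simp [secantMetric, vecMulVec_apply]

theorem isSymm_secantMetric (s y : ι → ℝ) : (secantMetric s y).IsSymm := by
  simp [secantMetric, IsSymm, transpose_vecMulVec]

theorem secantMetric_mulVec {s y : ι → ℝ} (hs : s ≠ 0) (hsy : s ⬝ᵥ y ≠ 0) :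
    secantMetric s y *ᵥ s = y := by
  have hss : s ⬝ᵥ s ≠ 0 := dotProduct_self_eq_zero.not.mpr hs
  simp [secantMetric, add_mulVec, sub_mulVec, smul_mulVec, vecMulVec_mulVec, smul_smul,
    inv_mul_cancel₀ hss, dotProduct_comm y s, inv_mul_cancel₀ hsy]

theorem dotProduct_secantMetric_mulVec (s y v : ι → ℝ) :
    v ⬝ᵥ (secantMetric s y *ᵥ v) = v ⬝ᵥ v - (s ⬝ᵥ v) ^ 2 / (s ⬝ᵥ s) + (y ⬝ᵥ v) ^ 2 / (s ⬝ᵥ y) := by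
  simp [secantMetric, add_mulVec, sub_mulVec, smul_mulVec, vecMulVec_mulVec, dotProduct_add,
    dotProduct_sub, dotProduct_smul, dotProduct_comm v s, dotProduct_comm v y]
  ring

theorem posDef_secantMetric {s y : ι → ℝ} (hs : s ≠ 0) (hsy : 0 < s ⬝ᵥ y) :
    (secantMetric s y).PosDef := by
  refine posDef_iff_dotProduct_mulVec.mpr ⟨isSymm_secantMetric s y, fun v hv => ?_⟩
  rw [star_trivial, dotProduct_secantMetric_mulVec, dotProduct_self_sub_sq_div hs]
  set w := v - ((s ⬝ᵥ v) / (s ⬝ᵥ s)) • s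
  have hww : 0 ≤ w ⬝ᵥ w := by simpa using dotProduct_star_self_nonneg w
  by_cases hw0 : w = 0
  · have hv_eq : v = ((s ⬝ᵥ v) / (s ⬝ᵥ s)) • s := sub_eq_zero.mp hw0
    have hc : (s ⬝ᵥ v) / (s ⬝ᵥ s) ≠ 0 := fun hc => hv (by rw [hv_eq, hc, zero_smul])
    have hyv : y ⬝ᵥ v ≠ 0 := by
      rw [hv_eq, dotProduct_smul, smul_eq_mul, dotProduct_comm y s]
      exact mul_ne_zero hc hsy.ne'
    rw [hw0, zero_dotProduct, zero_add]
    positivity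
  · have hw_pos : 0 < w ⬝ᵥ w := lt_of_le_of_ne hww (Ne.symm (dotProduct_self_eq_zero.not.mpr hw0))
    positivity

theorem contDiff_secantMetric_apply {E : Type*} [NormedAddCommGroup E] [NormedSpace ℝ E]
    {k : WithTop ℕ∞} {s y : E → ι → ℝ} (hs : ContDiff ℝ k s) (hy : ContDiff ℝ k y)
    {U : Set E} (hU : IsOpen U) (hsyU : ∀ x ∈ U, s x = y x) (hzero : ∀ x, s x = 0 → x ∈ U)
    (hsy : ∀ x, s x ≠ 0 → s x ⬝ᵥ y x ≠ 0) (i j : ι) :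
    ContDiff ℝ k fun x => secantMetric (s x) (y x) i j := by
  refine contDiff_iff_contDiffAt.mpr fun x => ?_
  by_cases hx : s x = 0
  · have hconst :
        (fun x => secantMetric (s x) (y x) i j) =ᶠ[nhds x] fun _ => (1 : Matrix ι ι ℝ) i j :=
      Filter.eventually_of_mem (hU.mem_nhds (hzero x hx)) fun z hz => by
        dsimp only
        rw [← hsyU z hz, secantMetric_self]
    exact contDiffAt_const.congr_of_eventuallyEq hconst
  · have hss : s x ⬝ᵥ s x ≠ 0 := dotProduct_self_eq_zero.not.mpr hx
    have hsyx := hsy x hx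
    simp only [secantMetric_apply]
    fun_prop (disch := assumption)

end Matrix

/-- A gradient-like vector field on `ℝⁿ` is the negative gradient of `h` with respect to
a suitable smooth Riemannian metric `g` that is the Euclidean metric near the zero set. -/
theorem stmt_0 (n : ℕ) (h : (Fin n → ℝ) → ℝ) (X : (Fin n → ℝ) → (Fin n → ℝ))
    (hh : ContDiff ℝ (⊤ : ℕ∞) h) (hX : ContDiff ℝ (⊤ : ℕ∞) X)
    (grad : (Fin n → ℝ) → (Fin n → ℝ))
    (hgrad : ∀ x i, grad x i = fderiv ℝ h x (Pi.single i 1))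
    (h1 : ∀ x, X x ≠ 0 → ∑ i, X x i * grad x i < 0)
    (h2 : ∃ U : Set (Fin n → ℝ), IsOpen U ∧ {x | X x = 0} ⊆ U ∧ ∀ x ∈ U, X x = -grad x) :
    ∃ g : (Fin n → ℝ) → Matrix (Fin n) (Fin n) ℝ,
      (∀ i j, ContDiff ℝ (⊤ : ℕ∞) fun x => g x i j) ∧
      (∀ x, (g x).IsSymm ∧ (g x).PosDef) ∧
      (∃ V : Set (Fin n → ℝ), IsOpen V ∧ {x | X x = 0} ⊆ V ∧ ∀ x ∈ V, g x = 1) ∧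
      (∀ x, (g x).mulVec (X x) = -grad x) := by
  obtain ⟨U, hUo, hZU, hU⟩ := h2
  have hgradC : ContDiff ℝ (⊤ : ℕ∞) grad := by
    have hfd := hh.fderiv_right (m := (⊤ : ℕ∞)) le_rfl
    exact contDiff_pi.mpr fun i => by
      simpa only [hgrad] using hfd.clm_apply (contDiff_const (c := Pi.single i 1))
  have hdescent : ∀ x, X x ≠ 0 → 0 < X x ⬝ᵥ -grad x := fun x hx => by
    simpa [dotProduct] using h1 x hx
  have hgrad_zero : ∀ x, X x = 0 → -grad x = 0 := fun x hx => (hU x (hZU hx)).symm.trans hx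
  refine ⟨fun x => secantMetric (X x) (-grad x),
    contDiff_secantMetric_apply hX hgradC.neg hUo hU hZU fun x hx => (hdescent x hx).ne',
    fun x => ⟨isSymm_secantMetric _ _, ?_⟩,
    ⟨U, hUo, hZU, fun x hx => by simp only [← hU x hx, secantMetric_self]⟩, fun x => ?_⟩
  · by_cases hx : X x = 0
    · simpa only [hx, hgrad_zero x hx, secantMetric_self] using PosDef.one
    · exact posDef_secantMetric hx (hdescent x hx)
  · by_cases hx : X x = 0
    · rw [hx, mulVec_zero, hgrad_zero x hx]
    · exact secantMetric_mulVec hx (hdescent x hx).ne'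
end

section
/- Let M be a compact smooth (C^∞) finite-dimensional manifold without boundary (Hausdorff, second countable), let X be a smooth vector field on M whose zero set consists of isolated points, and let h : M → ℝ be a smooth function with d_x h(X(x)) < 0 for every x with X(x) ≠ 0. Then for every integral curve γ : ℝ → M of X, both limits lim_{t→+∞} γ(t) and lim_{t→−∞} γ(t) exist, and each of them is a zero of X. -/
open scoped Manifold Topology
open Set Filter Metric

/-!
Along an integral curve `γ`, `h ∘ γ` is antitone with derivative `dh(X) ≤ 0`, and bounded since
`M` is compact, so it converges. If an ω-limit point `p` of `γ` had `X p ≠ 0`, then `dh(X) ≤ -δ < 0`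
on a chart ball around `p`; as `γ` moves with bounded speed in that chart, each of its
arbitrarily late visits near `p` lasts a fixed time and lowers `h ∘ γ` by a fixed amount, which
is impossible. Hence all ω-limit points are zeros of `X`, so they are isolated. A curve in a
compact space accumulating at a point `p` that is isolated among its ω-limit points converges
to `p`: otherwise it would cross the frontier of a small neighbourhood of `p` infinitely often,
creating an ω-limit point on that frontier. The limit at `-∞` follows by running `γ` backwards,
which turns `X` into `-X` and `h` into `-h`.
-/

theorem tendsto_atTop_of_mapClusterPt_of_isolated {M : Type*} [TopologicalSpace M]
    [CompactSpace M] [RegularSpace M] {γ : ℝ → M} (hγ : Continuous γ) {p : M}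
    (hp : MapClusterPt p atTop γ) {U : Set M} (hU : U ∈ 𝓝 p)
    (hUp : ∀ q ∈ U, MapClusterPt q atTop γ → q = p) :
    Tendsto γ atTop (𝓝 p) := by
  refine fun N hN => ?_
  obtain ⟨F, ⟨hFp, hFc⟩, hFNU⟩ := (closed_nhds_basis p).mem_iff.1 (inter_mem hN hU)
  refine mem_of_superset ?_ (preimage_mono (hFNU.trans inter_subset_left))
  by_contra hF
  set W := interior F
  have hWF : closure W ⊆ F := closure_minimal interior_subset hFc
  -- the curve keeps coming back into `W` and leaving `F`, so it keeps crossing `frontier W`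
  have hfrontier : ∃ᶠ t in atTop, γ t ∈ frontier W := by
    refine frequently_atTop.2 fun T => ?_
    obtain ⟨t₁, hTt₁, hγt₁⟩ :=
      frequently_atTop.1 (mapClusterPt_iff_frequently.1 hp W (interior_mem_nhds.2 hFp)) T
    obtain ⟨t₂, ht₁t₂, hγt₂⟩ := frequently_atTop.1 (not_eventually.1 hF) t₁
    by_contra! hnot
    have hsub : γ '' Icc t₁ t₂ ⊆ W ∪ (closure W)ᶜ := by
      rintro _ ⟨s, hs, rfl⟩
      by_cases hsW : γ s ∈ W
      · exact Or.inl hsW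
      · exact Or.inr fun hcl => hnot s (hTt₁.trans hs.1) ⟨hcl, by rwa [isOpen_interior.interior_eq]⟩
    have hW := (isPreconnected_Icc.image γ hγ.continuousOn).subset_left_of_subset_union
      isOpen_interior isClosed_closure.isOpen_compl
      (disjoint_compl_right.mono_right (compl_subset_compl.2 subset_closure)) hsub
      ⟨γ t₁, mem_image_of_mem γ ⟨le_rfl, ht₁t₂⟩, hγt₁⟩
    exact hγt₂ (interior_subset (hW (mem_image_of_mem γ ⟨ht₁t₂, le_rfl⟩)))
  obtain ⟨q, hq, hqγ⟩ := isClosed_frontier.isCompact.exists_mapClusterPt_of_frequently hfrontier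
  have hqp : q = p := hUp q (hFNU (hWF (frontier_subset_closure hq))).2 hqγ
  subst hqp
  exact isOpen_interior.inter_frontier_eq.subset ⟨mem_interior_iff_mem_nhds.2 hFp, hq⟩

section

variable {E H M : Type*} [NormedAddCommGroup E] [NormedSpace ℝ E] [TopologicalSpace H]
  {I : ModelWithCorners ℝ E H} [TopologicalSpace M] [ChartedSpace H M]
  {X : (x : M) → TangentSpace I x} {γ : ℝ → M}

theorem exists_closedBall_subset_extChartAt [I.Boundaryless] {p : M} {W : Set M}
    (hW : W ∈ 𝓝 p) : ∃ r > 0, closedBall (extChartAt I p p) r ⊆ (extChartAt I p).target ∧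
      (extChartAt I p).source ∩ extChartAt I p ⁻¹' closedBall (extChartAt I p p) r ⊆ W := by
  have hW' : (extChartAt I p).symm ⁻¹' W ∈ 𝓝 (extChartAt I p p) :=
    (continuousAt_extChartAt_symm p).preimage_mem_nhds (by rwa [extChartAt_to_inv])
  obtain ⟨r, hr, hrsub⟩ :=
    nhds_basis_closedBall.mem_iff.1 (inter_mem (extChartAt_target_mem_nhds p) hW')
  refine ⟨r, hr, fun y hy => (hrsub hy).1, fun x ⟨hx, hxr⟩ => ?_⟩
  simpa only [mem_preimage, (extChartAt I p).left_inv hx] using (hrsub hxr).2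

theorem isCompact_extChartAt_source_inter_preimage_closedBall [ProperSpace E] {p : M} {r : ℝ}
    (hr : closedBall (extChartAt I p p) r ⊆ (extChartAt I p).target) :
    IsCompact ((extChartAt I p).source ∩ extChartAt I p ⁻¹' closedBall (extChartAt I p p) r) := by
  rw [← (extChartAt I p).symm_image_eq_source_inter_preimage hr]
  exact (isCompact_closedBall _ r).image_of_continuousOn ((continuousOn_extChartAt_symm p).mono hr)

theorem IsMIntegralCurve.hasDerivAt_comp (hγ : IsMIntegralCurve γ X) {h : M → ℝ}
    (hh : MDifferentiable I 𝓘(ℝ, ℝ) h) (t : ℝ) :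
    HasDerivAt (fun s => h (γ s)) (show ℝ from mfderiv I 𝓘(ℝ, ℝ) h (γ t) (X (γ t))) t := by
  have hcomp := (hh (γ t)).hasMFDerivAt.comp t (hγ t)
  rw [hasMFDerivAt_iff_hasFDerivAt] at hcomp
  have hderiv : HasDerivAt (fun s => h (γ s)) _ t :=
    HasFDerivAt.hasDerivAt (𝕜 := ℝ) (F := ℝ) hcomp
  convert hderiv using 1
  have hvalue : ((mfderiv I 𝓘(ℝ, ℝ) h (γ t)).comp
      (ContinuousLinearMap.smulRight (1 : ℝ →L[ℝ] ℝ) (X (γ t)))) 1 =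
      (show ℝ from mfderiv I 𝓘(ℝ, ℝ) h (γ t) (X (γ t))) := by
    simp
  exact hvalue.symm

variable [IsManifold I 1 M]

theorem IsMIntegralCurve.hasDerivAt_extChartAt (hγ : IsMIntegralCurve γ X)
    {p : M} {t : ℝ} (ht : γ t ∈ (extChartAt I p).source) :
    HasDerivAt (extChartAt I p ∘ γ) (tangentCoordChange I (γ t) p (γ t) (X (γ t))) t := by
  rw [extChartAt_source] at ht
  rw [hasDerivAt_iff_hasFDerivAt]
  refine hasMFDerivAt_iff_hasFDerivAt.1 ?_
  refine ((hasMFDerivAt_extChartAt ht).comp t (hγ t)).congr_mfderiv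
    (ContinuousLinearMap.ext fun a => ?_)
  change mfderiv I I (chartAt H p) (γ t) ((show ℝ from a) • X (γ t)) =
    (show ℝ from a) • tangentCoordChange I (γ t) p (γ t) (X (γ t))
  rw [map_smul, mfderiv_chartAt_eq_tangentCoordChange ht]
  rfl

theorem continuousOn_tangentCoordChange_section
    (hX : Continuous fun x => (⟨x, X x⟩ : TangentBundle I M)) (p : M) :
    ContinuousOn (fun x => tangentCoordChange I x p x (X x)) (extChartAt I p).source := by
  rw [extChartAt_source]
  exact continuous_snd.comp_continuousOn
    ((trivializationAt E (TangentSpace I) p).continuousOn.comp hX.continuousOn fun x hx => by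
      simpa using hx)

theorem exists_norm_tangentCoordChange_section_le [ProperSpace E]
    (hX : Continuous fun x => (⟨x, X x⟩ : TangentBundle I M)) {p : M} {r : ℝ}
    (hr : closedBall (extChartAt I p p) r ⊆ (extChartAt I p).target) :
    ∃ C > 0, ∀ x ∈ (extChartAt I p).source ∩ extChartAt I p ⁻¹' closedBall (extChartAt I p p) r,
      ‖tangentCoordChange I x p x (X x)‖ ≤ C := by
  obtain ⟨C, hC⟩ :=
    (isCompact_extChartAt_source_inter_preimage_closedBall hr).exists_bound_of_continuousOn
      ((continuousOn_tangentCoordChange_section hX p).mono inter_subset_left)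
  exact ⟨max C 1, by positivity, fun x hx => (hC x hx).trans (le_max_left _ _)⟩

theorem IsMIntegralCurve.mapsTo_extChartAt_ball [T2Space M] [ProperSpace E]
    (hγ : IsMIntegralCurve γ X) {p : M} {r C : ℝ}
    (hr : closedBall (extChartAt I p p) r ⊆ (extChartAt I p).target) (hC₀ : 0 ≤ C)
    (hC : ∀ x ∈ (extChartAt I p).source ∩ extChartAt I p ⁻¹' closedBall (extChartAt I p p) r,
      ‖tangentCoordChange I x p x (X x)‖ ≤ C)
    {a b : ℝ} (hab : a ≤ b) (ha : γ a ∈ (extChartAt I p).source)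
    (hdist : dist (extChartAt I p (γ a)) (extChartAt I p p) + C * (b - a) < r) :
    MapsTo γ (Icc a b)
      ((extChartAt I p).source ∩ extChartAt I p ⁻¹' ball (extChartAt I p p) r) := by
  set e := extChartAt I p
  set O := e.source ∩ e ⁻¹' ball (e p) r
  set K := e.source ∩ e ⁻¹' closedBall (e p) r
  have hOK : O ⊆ K := inter_subset_inter_right _ (preimage_mono ball_subset_closedBall)
  have hO : IsOpen O := (continuousOn_extChartAt p).isOpen_inter_preimage
    (isOpen_extChartAt_source p) isOpen_ball
  have hγa : γ a ∈ O := ⟨ha, by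
    have := mul_nonneg hC₀ (sub_nonneg.2 hab)
    rw [mem_preimage, mem_ball]; linarith⟩
  -- `m` is the first time at which `γ` leaves `O`
  by_contra hexit
  obtain ⟨t, ht, htO⟩ := not_forall₂.1 hexit
  set J := Icc a b ∩ γ ⁻¹' Oᶜ
  have hJ : IsClosed J := isClosed_Icc.inter (hO.isClosed_compl.preimage hγ.continuous)
  set m := sInf J
  have hmJ : m ∈ J := hJ.csInf_mem ⟨t, ht, htO⟩ ⟨a, fun x hx => hx.1.1⟩
  have hbefore : ∀ u ∈ Ico a m, γ u ∈ O := fun u hu => by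
    by_contra huO
    have huJ : u ∈ J := ⟨⟨hu.1, hu.2.le.trans hmJ.1.2⟩, huO⟩
    exact (csInf_le ⟨a, fun x hx => hx.1.1⟩ huJ).not_gt hu.2
  have ham : a < m := hmJ.1.1.lt_of_ne fun ham => hmJ.2 (ham ▸ hγa)
  have hγm : γ m ∈ K :=
    (isCompact_extChartAt_source_inter_preimage_closedBall hr).isClosed.mem_of_tendsto
      (hγ.continuous.continuousAt.tendsto.mono_left nhdsWithin_le_nhds : Tendsto γ (𝓝[<] m) _)
      (mem_of_superset (Ioo_mem_nhdsLT ham) fun u hu => hOK (hbefore u ⟨hu.1.le, hu.2⟩))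
  have hK : ∀ u ∈ Icc a m, γ u ∈ K := fun u hu =>
    hu.2.lt_or_eq.elim (fun hum => hOK (hbefore u ⟨hu.1, hum⟩)) fun hum => hum ▸ hγm
  have hspeed : ‖e (γ m) - e (γ a)‖ ≤ C * (m - a) := norm_image_sub_le_of_norm_deriv_le_segment'
    (f := e ∘ γ) (fun u hu => (hγ.hasDerivAt_extChartAt (hK u hu).1).hasDerivWithinAt)
    (fun u hu => hC _ (hK u (Ico_subset_Icc_self hu))) m (right_mem_Icc.2 ham.le)
  refine hmJ.2 ⟨hγm.1, ?_⟩
  have htri := dist_triangle (e (γ m)) (e (γ a)) (e p)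
  have := mul_le_mul_of_nonneg_left (sub_le_sub_right hmJ.1.2 a) hC₀
  rw [← dist_eq_norm] at hspeed
  rw [mem_preimage, mem_ball]
  linarith

theorem continuous_mfderiv_apply_section
    (hX : Continuous fun x => (⟨x, X x⟩ : TangentBundle I M)) {h : M → ℝ}
    (hh : ContMDiff I 𝓘(ℝ, ℝ) 1 h) :
    Continuous fun x => (show ℝ from mfderiv I 𝓘(ℝ, ℝ) h x (X x)) :=
  continuous_snd.comp ((tangentBundleModelSpaceHomeomorph 𝓘(ℝ, ℝ)).continuous.comp
    ((hh.continuous_tangentMap le_rfl).comp hX))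

theorem IsMIntegralCurve.eq_zero_of_mapClusterPt [T2Space M] [ProperSpace E] [I.Boundaryless]
    (hγ : IsMIntegralCurve γ X) (hX : Continuous fun x => (⟨x, X x⟩ : TangentBundle I M))
    {h g : M → ℝ} (hg : Continuous g) (hderiv : ∀ t, HasDerivAt (fun s => h (γ s)) (g (γ t)) t)
    (hneg : ∀ x, X x ≠ 0 → g x < 0) {c : ℝ} (hc : Tendsto (fun t => h (γ t)) atTop (𝓝 c))
    (hcle : ∀ t, c ≤ h (γ t)) {p : M} (hp : MapClusterPt p atTop γ) : X p = 0 := by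
  by_contra hXp
  have hgp := hneg p hXp
  set δ := -g p / 2
  have hδ : 0 < δ := by simp only [δ]; linarith
  obtain ⟨r, hr, hball, hKW⟩ := exists_closedBall_subset_extChartAt (I := I)
    ((isOpen_lt hg continuous_const).mem_nhds (show g p < -δ by simp only [δ]; linarith))
  obtain ⟨C, hC, hbound⟩ := exists_norm_tangentCoordChange_section_le hX hball
  -- each visit of `γ` to the chart ball of radius `r / 2` lasts at least `τ`, and during it
  -- `h ∘ γ` decreases by at least `δ * τ`
  set τ := r / (2 * C)
  have hCτ : C * τ = r / 2 := by simp only [τ]; field_simp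
  have hτ : 0 < τ := by positivity
  have hnear : (extChartAt I p).source ∩ extChartAt I p ⁻¹' ball (extChartAt I p p) (r / 2) ∈ 𝓝 p :=
    ((continuousOn_extChartAt p).isOpen_inter_preimage (isOpen_extChartAt_source p)
      isOpen_ball).mem_nhds ⟨mem_extChartAt_source p, mem_ball_self (half_pos hr)⟩
  obtain ⟨t, ⟨hγt, hγtr⟩, hht⟩ := ((mapClusterPt_iff_frequently.1 hp _ hnear).and_eventually
    (hc.eventually_lt_const (lt_add_of_pos_right c (mul_pos hδ hτ)))).exists
  have hstay := hγ.mapsTo_extChartAt_ball hball hC.le hbound (le_add_of_nonneg_right hτ.le) hγt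
    (by rw [add_sub_cancel_left, hCτ]; exact add_lt_of_lt_sub_right (by linarith [mem_ball.1 hγtr]))
  have hdrop := (convex_Icc t (t + τ)).image_sub_le_mul_sub_of_deriv_le
    (fun u _ => (hderiv u).continuousAt.continuousWithinAt)
    (fun u _ => (hderiv u).differentiableAt.differentiableWithinAt)
    (fun u hu => by
      rw [(hderiv u).deriv]
      exact (hKW (inter_subset_inter_right _ (preimage_mono ball_subset_closedBall)
        (hstay (interior_subset hu)))).le)
    t (left_mem_Icc.2 (by linarith)) (t + τ) (right_mem_Icc.2 (by linarith)) (by linarith)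
  rw [add_sub_cancel_left] at hdrop
  linarith [hcle (t + τ)]

theorem IsMIntegralCurve.exists_tendsto_atTop_of_lyapunov [CompactSpace M] [T2Space M]
    [ProperSpace E] [I.Boundaryless] (hγ : IsMIntegralCurve γ X)
    (hX : Continuous fun x => (⟨x, X x⟩ : TangentBundle I M))
    (hiso : ∀ x : M, X x = 0 → ∃ U : Set M, IsOpen U ∧ x ∈ U ∧ ∀ y ∈ U, X y = 0 → y = x)
    {h : M → ℝ} (hh : ContMDiff I 𝓘(ℝ, ℝ) 1 h)
    (hlyap : ∀ x : M, X x ≠ 0 → (show ℝ from mfderiv I 𝓘(ℝ, ℝ) h x (X x)) < 0) :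
    ∃ p : M, Tendsto γ atTop (𝓝 p) ∧ X p = 0 := by
  set g : M → ℝ := fun x => mfderiv I 𝓘(ℝ, ℝ) h x (X x)
  have hderiv : ∀ t, HasDerivAt (fun s => h (γ s)) (g (γ t)) t :=
    hγ.hasDerivAt_comp (hh.mdifferentiable one_ne_zero)
  have hg_nonpos : ∀ x, g x ≤ 0 := fun x => by
    by_cases hx : X x = 0
    · exact (show g x = 0 by simp only [g]; rw [hx]; exact map_zero _).le
    · exact (hlyap x hx).le
  have hanti : Antitone fun t => h (γ t) :=
    antitone_of_deriv_nonpos (fun t => (hderiv t).differentiableAt)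
      fun t => (hderiv t).deriv ▸ hg_nonpos _
  have hbdd : BddBelow (range fun t => h (γ t)) :=
    (isCompact_range hh.continuous).bddBelow.mono (range_comp_subset_range γ h)
  have hzero : ∀ q, MapClusterPt q atTop γ → X q = 0 := fun q =>
    hγ.eq_zero_of_mapClusterPt hX (continuous_mfderiv_apply_section hX hh) hderiv hlyap
      (tendsto_atTop_ciInf hanti hbdd) (ciInf_le hbdd)
  obtain ⟨p, hp⟩ := exists_clusterPt_of_compactSpace (map γ atTop)
  obtain ⟨U, hU, hpU, hUp⟩ := hiso p (hzero p hp)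
  exact ⟨p, tendsto_atTop_of_mapClusterPt_of_isolated hγ.continuous hp (hU.mem_nhds hpU)
    fun q hqU hq => hUp q hqU (hzero q hq), hzero p hp⟩

theorem IsMIntegralCurve.exists_tendsto_atBot_of_lyapunov [CompactSpace M] [T2Space M]
    [ProperSpace E] [I.Boundaryless] (hγ : IsMIntegralCurve γ X)
    (hX : Continuous fun x => (⟨x, X x⟩ : TangentBundle I M))
    (hiso : ∀ x : M, X x = 0 → ∃ U : Set M, IsOpen U ∧ x ∈ U ∧ ∀ y ∈ U, X y = 0 → y = x)
    {h : M → ℝ} (hh : ContMDiff I 𝓘(ℝ, ℝ) 1 h)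
    (hlyap : ∀ x : M, X x ≠ 0 → (show ℝ from mfderiv I 𝓘(ℝ, ℝ) h x (X x)) < 0) :
    ∃ q : M, Tendsto γ atBot (𝓝 q) ∧ X q = 0 := by
  have hγ' : IsMIntegralCurve (fun t => γ (-t)) (-X) := by
    simpa [Function.comp_def] using hγ.comp_mul (-1)
  have hX' : Continuous fun x => (⟨x, (-X) x⟩ : TangentBundle I M) :=
    (-(⟨X, contMDiff_zero_iff.2 hX⟩ : Cₛ^0⟮I; E, TangentSpace I⟯)).contMDiff.continuous
  obtain ⟨q, hq, hq0⟩ := hγ'.exists_tendsto_atTop_of_lyapunov hX'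
    (fun x hx => by simpa using hiso x (neg_eq_zero.1 hx)) (h := -h) hh.neg fun x hx => by
      convert hlyap x (by simpa using hx) using 1
      rw [mfderiv_neg]
      exact neg_eq_iff_eq_neg.2 (map_neg _ _)
  refine ⟨q, ?_, neg_eq_zero.1 hq0⟩
  simpa [Function.comp_def] using hq.comp tendsto_neg_atBot_atTop

end

theorem stmt_3_general {d : ℕ} {M : Type*} [TopologicalSpace M] [T2Space M]
    [CompactSpace M]
    [ChartedSpace (EuclideanSpace ℝ (Fin d)) M]
    [IsManifold (𝓡 d) (⊤ : ℕ∞) M]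
    (X : (x : M) → TangentSpace (𝓡 d) x)
    (hX : ContMDiff (𝓡 d) (𝓡 d).tangent (⊤ : ℕ∞)
      (fun x => (⟨x, X x⟩ : TangentBundle (𝓡 d) M)))
    (hiso : ∀ x : M, X x = 0 → ∃ U : Set M, IsOpen U ∧ x ∈ U ∧
      ∀ y ∈ U, X y = 0 → y = x)
    (h : M → ℝ) (hh : ContMDiff (𝓡 d) 𝓘(ℝ, ℝ) (⊤ : ℕ∞) h)
    (hlyap : ∀ x : M, X x ≠ 0 → (show ℝ from mfderiv (𝓡 d) 𝓘(ℝ, ℝ) h x (X x)) < 0)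
    (γ : ℝ → M) (hγ : IsMIntegralCurve γ X) :
    (∃ p : M, Filter.Tendsto γ Filter.atTop (nhds p) ∧ X p = 0) ∧
    (∃ q : M, Filter.Tendsto γ Filter.atBot (nhds q) ∧ X q = 0) :=
  ⟨hγ.exists_tendsto_atTop_of_lyapunov hX.continuous hiso (hh.of_le (by simp)) hlyap,
    hγ.exists_tendsto_atBot_of_lyapunov hX.continuous hiso (hh.of_le (by simp)) hlyap⟩

/-- On a closed manifold, every integral curve of a gradient-like vector field (with
isolated zeros and a strict Lyapunov function `h`) converges to a zero of the vector
field as `t → +∞` and as `t → -∞`. -/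
theorem stmt_3 {d : ℕ} {M : Type*} [TopologicalSpace M] [T2Space M]
    [SecondCountableTopology M] [CompactSpace M]
    [ChartedSpace (EuclideanSpace ℝ (Fin d)) M]
    [IsManifold (𝓡 d) (⊤ : ℕ∞) M]
    (X : (x : M) → TangentSpace (𝓡 d) x)
    (hX : ContMDiff (𝓡 d) (𝓡 d).tangent (⊤ : ℕ∞)
      (fun x => (⟨x, X x⟩ : TangentBundle (𝓡 d) M)))
    (hiso : ∀ x : M, X x = 0 → ∃ U : Set M, IsOpen U ∧ x ∈ U ∧
      ∀ y ∈ U, X y = 0 → y = x)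
    (h : M → ℝ) (hh : ContMDiff (𝓡 d) 𝓘(ℝ, ℝ) (⊤ : ℕ∞) h)
    (hlyap : ∀ x : M, X x ≠ 0 → (show ℝ from mfderiv (𝓡 d) 𝓘(ℝ, ℝ) h x (X x)) < 0)
    (γ : ℝ → M) (hγ : IsMIntegralCurve γ X) :
    (∃ p : M, Filter.Tendsto γ Filter.atTop (nhds p) ∧ X p = 0) ∧
    (∃ q : M, Filter.Tendsto γ Filter.atBot (nhds q) ∧ X q = 0) :=
  stmt_3_general X hX hiso h hh hlyap γ hγ
end

section
/- Let 0 ≤ ℓ ≤ n and ε > 0; write y = (y⁺, y⁻) ∈ ℝ^{n−ℓ} × ℝ^ℓ and h(y) = ½(‖y⁺‖² − ‖y⁻‖²); let S⁺ = {(y⁺, 0) : ‖y⁺‖² = 2ε} and S⁻ = {(0, y⁻) : ‖y⁻‖² = 2ε}. Define Θ(y⁺, y⁻, s) = (x⁺, x⁻) with x⁺ = (1−s²)^{−1/2}(y⁺, s y⁻) and x⁻ = (1−s²)^{−1/2}(s y⁺, y⁻). Then: Θ is smooth on {(y⁺, y⁻, s) : s² < 1}; the restriction θ of Θ to S⁺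 × S⁻ × [0, 1/2) (i.e. to ‖y⁺‖² = 2ε, ‖y⁻‖² = 2ε, 0 ≤ s < 1/2) is injective; θ(p, q, 0) = (p, q) for p ∈ S⁺, q ∈ S⁻; for all such (y⁺, y⁻, s) one has h(x⁺) = ε and h(x⁻) = −ε; and for 0 < s < 1/2, x⁻ = Φ_t(x⁺) with t = −log s > 0, where Φ_t(u⁺, u⁻) = (e^{−t} u⁺, e^{t} u⁻) is the flow of the negative gradient vector field −grad h = (−y⁺, y⁻). -/
/-!
Put `c = (1 - s²)^{-1/2}`, so that `x⁺ = c (y⁺, s y⁻)` and `x⁻ = c (s y⁺, y⁻) = (s x⁺₁, s⁻¹ x⁺₂)`: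
this is the image of `x⁺` under the flow at time `t = -log s`. When `‖y⁺‖ = ‖y⁻‖`, the identity
`c² (1 - s²) = 1` gives `‖x⁺₁‖² - ‖x⁺₂‖² = ‖y⁺‖²` and `‖x⁻₁‖² - ‖x⁻₂‖² = -‖y⁻‖²`.
Since `x⁺₁ ≠ 0`, the relation `x⁻₁ = s x⁺₁` recovers `s`, and then `y^±` by dividing by `c`.
-/

open Real

noncomputable section

namespace Collar

variable {E F : Type*} [NormedAddCommGroup E] [NormedSpace ℝ E]
  [NormedAddCommGroup F] [NormedSpace ℝ F]

def scale (s : ℝ) : ℝ := (√(1 - s ^ 2))⁻¹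

def map (p : E × F × ℝ) : (E × F) × (E × F) :=
  ((scale p.2.2 • p.1, (scale p.2.2 * p.2.2) • p.2.1),
   ((scale p.2.2 * p.2.2) • p.1, scale p.2.2 • p.2.1))

lemma scale_pos {s : ℝ} (hs : s ^ 2 < 1) : 0 < scale s :=
  inv_pos.mpr (sqrt_pos.mpr (by linarith))

lemma scale_sq_mul {s : ℝ} (hs : s ^ 2 < 1) : scale s ^ 2 * (1 - s ^ 2) = 1 := by
  rw [scale, inv_pow, sq_sqrt (by linarith)]
  exact inv_mul_cancel₀ (by linarith)

@[simp]
lemma scale_zero : scale 0 = 1 := by simp [scale]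

lemma contDiffOn_scale {n : WithTop ℕ∞} : ContDiffOn ℝ n scale {s | s ^ 2 < 1} := by
  intro s hs
  have hpos : 0 < 1 - s ^ 2 := by linarith [show s ^ 2 < 1 from hs]
  have hsqrt : ContDiffAt ℝ n (fun s : ℝ => √(1 - s ^ 2)) s :=
    (contDiffAt_sqrt hpos.ne').comp s (contDiffAt_const.sub (contDiffAt_id.pow 2))
  exact (hsqrt.inv (sqrt_pos.mpr hpos).ne').contDiffWithinAt

lemma contDiffOn_map {n : WithTop ℕ∞} :
    ContDiffOn ℝ n (map (E := E) (F := F)) {p | p.2.2 ^ 2 < 1} := by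
  have hc : ContDiffOn ℝ n (fun p : E × F × ℝ => scale p.2.2) {p | p.2.2 ^ 2 < 1} :=
    contDiffOn_scale.comp contDiff_snd.snd.contDiffOn fun _ hp => hp
  have hcs := hc.mul contDiff_snd.snd.contDiffOn
  exact ((hc.smul contDiffOn_fst).prodMk (hcs.smul contDiff_snd.fst.contDiffOn)).prodMk
    ((hcs.smul contDiffOn_fst).prodMk (hc.smul contDiff_snd.fst.contDiffOn))

@[simp]
lemma map_zero_param (yp : E) (ym : F) : map (yp, ym, 0) = ((yp, 0), (0, ym)) := by
  simp [map]

lemma map_snd_fst (p : E × F × ℝ) : (map p).2.1 = p.2.2 • (map p).1.1 := by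
  simp only [map, smul_smul, mul_comm]

lemma map_snd_eq {s : ℝ} (hs : s ≠ 0) (yp : E) (ym : F) :
    (map (yp, ym, s)).2 = (s • (map (yp, ym, s)).1.1, s⁻¹ • (map (yp, ym, s)).1.2) := by
  simp only [map, smul_smul]
  congr 2
  · ring
  · field_simp

lemma injOn_map :
    Set.InjOn (map (E := E) (F := F)) {p | p.1 ≠ 0 ∧ p.2.2 ^ 2 < 1} := by
  rintro ⟨yp, ym, s⟩ ⟨hyp, hs⟩ ⟨zp, zm, t⟩ ⟨-, ht⟩ heq
  have hx1 : (map (yp, ym, s)).1.1 = (map (zp, zm, t)).1.1 := congrArg (·.1.1) heq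
  have hx3 : (map (yp, ym, s)).2.1 = (map (zp, zm, t)).2.1 := congrArg (·.2.1) heq
  have hx4 : (map (yp, ym, s)).2.2 = (map (zp, zm, t)).2.2 := congrArg (·.2.2) heq
  have hx1_ne : (map (yp, ym, s)).1.1 ≠ 0 := smul_ne_zero (scale_pos hs).ne' hyp
  have hst : s = t := smul_left_injective ℝ hx1_ne <| calc
    s • (map (yp, ym, s)).1.1 = (map (yp, ym, s)).2.1 := (map_snd_fst (yp, ym, s)).symm
    _ = t • (map (yp, ym, s)).1.1 := by rw [hx3, hx1, map_snd_fst]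
  subst hst
  have hc := (scale_pos hs).ne'
  simp only [map] at hx1 hx4
  rw [smul_right_injective E hc hx1, smul_right_injective F hc hx4]

lemma norm_sq_sub_norm_sq_map_fst {s : ℝ} (hs : s ^ 2 < 1) {yp : E} {ym : F}
    (hy : ‖ym‖ = ‖yp‖) :
    ‖(map (yp, ym, s)).1.1‖ ^ 2 - ‖(map (yp, ym, s)).1.2‖ ^ 2 = ‖yp‖ ^ 2 := by
  simp only [map, norm_smul, norm_mul, norm_eq_abs, mul_pow, sq_abs, hy]
  linear_combination ‖yp‖ ^ 2 * scale_sq_mul hs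

lemma norm_sq_sub_norm_sq_map_snd {s : ℝ} (hs : s ^ 2 < 1) {yp : E} {ym : F}
    (hy : ‖ym‖ = ‖yp‖) :
    ‖(map (yp, ym, s)).2.1‖ ^ 2 - ‖(map (yp, ym, s)).2.2‖ ^ 2 = -‖ym‖ ^ 2 := by
  simp only [map, norm_smul, norm_mul, norm_eq_abs, mul_pow, sq_abs, hy]
  linear_combination -‖yp‖ ^ 2 * scale_sq_mul hs

end Collar

namespace Real

lemma exp_neg_neg_log {s : ℝ} (hs : 0 < s) : exp (-(-log s)) = s := by
  rw [neg_neg, exp_log hs]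

lemma exp_neg_log {s : ℝ} (hs : 0 < s) : exp (-log s) = s⁻¹ := by
  rw [exp_neg, exp_log hs]

end Real

theorem stmt_7_general (n ℓ : ℕ) (ε : ℝ) (hε : 0 < ε)
    (h : EuclideanSpace ℝ (Fin (n - ℓ)) × EuclideanSpace ℝ (Fin ℓ) → ℝ)
    (hdef : ∀ y, h y = (‖y.1‖ ^ 2 - ‖y.2‖ ^ 2) / 2)
    (Θ : EuclideanSpace ℝ (Fin (n - ℓ)) × EuclideanSpace ℝ (Fin ℓ) × ℝ →
      (EuclideanSpace ℝ (Fin (n - ℓ)) × EuclideanSpace ℝ (Fin ℓ)) ×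
      (EuclideanSpace ℝ (Fin (n - ℓ)) × EuclideanSpace ℝ (Fin ℓ)))
    (hΘ : ∀ (yp : EuclideanSpace ℝ (Fin (n - ℓ))) (ym : EuclideanSpace ℝ (Fin ℓ)) (s : ℝ),
      Θ (yp, ym, s) =
        (((Real.sqrt (1 - s ^ 2))⁻¹ • yp, ((Real.sqrt (1 - s ^ 2))⁻¹ * s) • ym),
         (((Real.sqrt (1 - s ^ 2))⁻¹ * s) • yp, (Real.sqrt (1 - s ^ 2))⁻¹ • ym)))
    (Φ : ℝ → EuclideanSpace ℝ (Fin (n - ℓ)) × EuclideanSpace ℝ (Fin ℓ) →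
      EuclideanSpace ℝ (Fin (n - ℓ)) × EuclideanSpace ℝ (Fin ℓ))
    (hΦ : ∀ t u, Φ t u = (Real.exp (-t) • u.1, Real.exp t • u.2)) :
    ContDiffOn ℝ (⊤ : ℕ∞) Θ {p | p.2.2 ^ 2 < 1} ∧
    Set.InjOn Θ {p | ‖p.1‖ ^ 2 = 2 * ε ∧ ‖p.2.1‖ ^ 2 = 2 * ε ∧ 0 ≤ p.2.2 ∧ p.2.2 < 1 / 2} ∧
    (∀ yp ym, Θ (yp, ym, 0) = ((yp, 0), (0, ym))) ∧
    (∀ yp ym (s : ℝ), ‖yp‖ ^ 2 = 2 * ε → ‖ym‖ ^ 2 = 2 * ε → 0 ≤ s → s < 1 / 2 →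
      h (Θ (yp, ym, s)).1 = ε ∧ h (Θ (yp, ym, s)).2 = -ε) ∧
    (∀ yp ym (s : ℝ), ‖yp‖ ^ 2 = 2 * ε → ‖ym‖ ^ 2 = 2 * ε → 0 < s → s < 1 / 2 →
      0 < -Real.log s ∧ (Θ (yp, ym, s)).2 = Φ (-Real.log s) (Θ (yp, ym, s)).1) := by
  obtain rfl : Θ = Collar.map := funext fun p => hΘ p.1 p.2.1 p.2.2
  have sq_lt_one {s : ℝ} (h0 : 0 ≤ s) (h1 : s < 1 / 2) : s ^ 2 < 1 := by nlinarith
  have norm_eq {yp : EuclideanSpace ℝ (Fin (n - ℓ))} {ym : EuclideanSpace ℝ (Fin ℓ)}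
      (hyp : ‖yp‖ ^ 2 = 2 * ε) (hym : ‖ym‖ ^ 2 = 2 * ε) : ‖ym‖ = ‖yp‖ :=
    (pow_left_inj₀ (norm_nonneg _) (norm_nonneg _) two_ne_zero).mp (hym.trans hyp.symm)
  refine ⟨Collar.contDiffOn_map, ?_, Collar.map_zero_param, ?_, ?_⟩
  · refine Collar.injOn_map.mono ?_
    rintro p ⟨hp1, -, hs0, hs1⟩
    refine ⟨?_, sq_lt_one hs0 hs1⟩
    rw [← norm_ne_zero_iff, ← pow_ne_zero_iff two_ne_zero, hp1]
    positivity
  · intro yp ym s hyp hym hs0 hs1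
    rw [hdef, hdef, Collar.norm_sq_sub_norm_sq_map_fst (sq_lt_one hs0 hs1) (norm_eq hyp hym),
      Collar.norm_sq_sub_norm_sq_map_snd (sq_lt_one hs0 hs1) (norm_eq hyp hym), hyp, hym]
    constructor <;> ring
  · intro yp ym s _ _ hs0 hs1
    refine ⟨neg_pos.mpr (log_neg hs0 (by linarith)), ?_⟩
    rw [hΦ, exp_neg_neg_log hs0, exp_neg_log hs0]
    exact Collar.map_snd_eq hs0.ne' yp ym

/-- The collar map `θ(y⁺, y⁻, s) = ((1-s²)^{-1/2}(y⁺, s y⁻), (1-s²)^{-1/2}(s y⁺, y⁻))` of the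
boundary stratum `S⁺ × S⁻` inside the space `P` of pairs of points on the level sets
`{h = ε}`, `{h = -ε}` joined by a (possibly broken) trajectory of `-grad h`. -/
theorem stmt_7 (n ℓ : ℕ) (hℓn : ℓ ≤ n) (ε : ℝ) (hε : 0 < ε)
    (h : EuclideanSpace ℝ (Fin (n - ℓ)) × EuclideanSpace ℝ (Fin ℓ) → ℝ)
    (hdef : ∀ y, h y = (‖y.1‖ ^ 2 - ‖y.2‖ ^ 2) / 2)
    (Θ : EuclideanSpace ℝ (Fin (n - ℓ)) × EuclideanSpace ℝ (Fin ℓ) × ℝ →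
      (EuclideanSpace ℝ (Fin (n - ℓ)) × EuclideanSpace ℝ (Fin ℓ)) ×
      (EuclideanSpace ℝ (Fin (n - ℓ)) × EuclideanSpace ℝ (Fin ℓ)))
    (hΘ : ∀ (yp : EuclideanSpace ℝ (Fin (n - ℓ))) (ym : EuclideanSpace ℝ (Fin ℓ)) (s : ℝ),
      Θ (yp, ym, s) =
        (((Real.sqrt (1 - s ^ 2))⁻¹ • yp, ((Real.sqrt (1 - s ^ 2))⁻¹ * s) • ym),
         (((Real.sqrt (1 - s ^ 2))⁻¹ * s) • yp, (Real.sqrt (1 - s ^ 2))⁻¹ • ym)))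
    (Φ : ℝ → EuclideanSpace ℝ (Fin (n - ℓ)) × EuclideanSpace ℝ (Fin ℓ) →
      EuclideanSpace ℝ (Fin (n - ℓ)) × EuclideanSpace ℝ (Fin ℓ))
    (hΦ : ∀ t u, Φ t u = (Real.exp (-t) • u.1, Real.exp t • u.2)) :
    ContDiffOn ℝ (⊤ : ℕ∞) Θ {p | p.2.2 ^ 2 < 1} ∧
    Set.InjOn Θ {p | ‖p.1‖ ^ 2 = 2 * ε ∧ ‖p.2.1‖ ^ 2 = 2 * ε ∧ 0 ≤ p.2.2 ∧ p.2.2 < 1 / 2} ∧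
    (∀ yp ym, Θ (yp, ym, 0) = ((yp, 0), (0, ym))) ∧
    (∀ yp ym (s : ℝ), ‖yp‖ ^ 2 = 2 * ε → ‖ym‖ ^ 2 = 2 * ε → 0 ≤ s → s < 1 / 2 →
      h (Θ (yp, ym, s)).1 = ε ∧ h (Θ (yp, ym, s)).2 = -ε) ∧
    (∀ yp ym (s : ℝ), ‖yp‖ ^ 2 = 2 * ε → ‖ym‖ ^ 2 = 2 * ε → 0 < s → s < 1 / 2 →
      0 < -Real.log s ∧ (Θ (yp, ym, s)).2 = Φ (-Real.log s) (Θ (yp, ym, s)).1) :=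
  stmt_7_general n ℓ ε hε h hdef Θ hΘ Φ hΦ
end
end

section
/- Let 0 ≤ k ≤ n and let z⁺ ∈ ℝ^{n−k} with z⁺ ≠ 0. Define y : [0, ‖z⁺‖²/2) → ℝ^k × ℝ^{n−k} by y(s) = (0, (1 − 2s/‖z⁺‖²)^{1/2} z⁺). Then y(0) = (0, z⁺); for every s ∈ [0, ‖z⁺‖²/2), y(s) ≠ 0 and y'(s) = Y^{(k)}(y(s)); h_k(y(s)) = h_k(0, z⁺) − s for every such s; and y(s) → 0 as s → ‖z⁺‖²/2 from the left. -/
/-! Along the ray through `(0, z⁺)` the field `Y^{(k)}` is `w ↦ -‖w‖⁻² w`, so `‖y(s)‖²` must decrease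
at rate `2`; with `‖y(0)‖² = ‖z⁺‖²` this forces `‖y(s)‖² = ‖z⁺‖² - 2s`, which is the square-root
profile of `y`. Then `h_k(y(s)) = ‖y(s)‖²/2 = h_k(0, z⁺) - s`, and `y` reaches the critical point `0`
at `s = ‖z⁺‖²/2`. -/

open Filter Topology

section SqrtProfile

variable {F : Type*} [NormedAddCommGroup F] [NormedSpace ℝ F]

theorem norm_sqrt_smul_sq {a : ℝ} (ha : 0 ≤ a) (z : F) : ‖√a • z‖ ^ 2 = a * ‖z‖ ^ 2 := by
  rw [norm_smul, mul_pow, Real.norm_eq_abs, sq_abs, Real.sq_sqrt ha]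

theorem one_sub_two_mul_div_pos {c s : ℝ} (hc : 0 < c) (hs : s < c / 2) : 0 < 1 - 2 * s / c := by
  rw [sub_pos, div_lt_one hc]
  linarith

theorem hasDerivAt_sqrt_one_sub_two_mul_div {c s : ℝ} (hc : 0 < c) (hs : s < c / 2) :
    HasDerivAt (fun t => √(1 - 2 * t / c)) (-(c * √(1 - 2 * s / c))⁻¹) s := by
  have hpos := one_sub_two_mul_div_pos hc hs
  have hlin : HasDerivAt (fun t : ℝ => 1 - 2 * t / c) (-(2 * 1 / c)) s :=
    (((hasDerivAt_id s).const_mul 2).div_const c).const_sub 1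
  convert hlin.sqrt hpos.ne' using 1
  field_simp

theorem hasDerivAt_sqrt_one_sub_smul {z : F} (hz : z ≠ 0) {s : ℝ} (hs : s < ‖z‖ ^ 2 / 2) :
    HasDerivAt (fun t => √(1 - 2 * t / ‖z‖ ^ 2) • z)
      ((‖√(1 - 2 * s / ‖z‖ ^ 2) • z‖ ^ 2)⁻¹ • -(√(1 - 2 * s / ‖z‖ ^ 2) • z)) s := by
  have hc : 0 < ‖z‖ ^ 2 := by positivity
  have hpos := one_sub_two_mul_div_pos hc hs
  convert (hasDerivAt_sqrt_one_sub_two_mul_div hc hs).smul_const z using 1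
  rw [norm_sqrt_smul_sq hpos.le, smul_neg, smul_smul, ← neg_smul]
  congr 1
  have hroot : 0 < √(1 - 2 * s / ‖z‖ ^ 2) := Real.sqrt_pos.mpr hpos
  nth_rewrite 1 [← Real.sq_sqrt hpos.le]
  field_simp

theorem tendsto_sqrt_one_sub_smul_zero (z : F) :
    Tendsto (fun t => √(1 - 2 * t / ‖z‖ ^ 2) • z) (𝓝 (‖z‖ ^ 2 / 2)) (𝓝 0) := by
  have hcont : Continuous fun t => √(1 - 2 * t / ‖z‖ ^ 2) • z := by fun_prop
  convert hcont.tendsto (‖z‖ ^ 2 / 2)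
  rcases eq_or_ne z 0 with rfl | hz
  · exact (smul_zero _).symm
  · have hval : 1 - 2 * (‖z‖ ^ 2 / 2) / ‖z‖ ^ 2 = 0 := by
      field_simp
      ring
    simp [hval]

end SqrtProfile

theorem stmt_12_general (n k : ℕ)
    (z : EuclideanSpace ℝ (Fin (n - k))) (hz : z ≠ 0)
    (hfun : EuclideanSpace ℝ (Fin k) × EuclideanSpace ℝ (Fin (n - k)) → ℝ)
    (hhfun : ∀ x, hfun x = -‖x.1‖ ^ 2 / 2 + ‖x.2‖ ^ 2 / 2)
    (Y : EuclideanSpace ℝ (Fin k) × EuclideanSpace ℝ (Fin (n - k)) →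
         EuclideanSpace ℝ (Fin k) × EuclideanSpace ℝ (Fin (n - k)))
    (hY : ∀ x, x ≠ 0 → Y x = (‖x.1‖ ^ 2 + ‖x.2‖ ^ 2)⁻¹ • (x.1, -x.2))
    (y : ℝ → EuclideanSpace ℝ (Fin k) × EuclideanSpace ℝ (Fin (n - k)))
    (hy : ∀ s, y s = (0, Real.sqrt (1 - 2 * s / ‖z‖ ^ 2) • z)) :
    y 0 = (0, z) ∧
    (∀ s, 0 ≤ s → s < ‖z‖ ^ 2 / 2 →
      y s ≠ 0 ∧ HasDerivAt y (Y (y s)) s ∧ hfun (y s) = hfun (0, z) - s) ∧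
    Filter.Tendsto y (nhdsWithin (‖z‖ ^ 2 / 2) (Set.Iio (‖z‖ ^ 2 / 2))) (nhds 0) := by
  have hc : 0 < ‖z‖ ^ 2 := by positivity
  obtain rfl : y = fun s => (0, √(1 - 2 * s / ‖z‖ ^ 2) • z) := funext hy
  refine ⟨by simp, fun s _ hs => ?_, ?_⟩
  · have hpos := one_sub_two_mul_div_pos hc hs
    have hne : √(1 - 2 * s / ‖z‖ ^ 2) • z ≠ 0 :=
      smul_ne_zero (Real.sqrt_pos.mpr hpos).ne' hz
    refine ⟨fun h => hne (congrArg Prod.snd h), ?_, ?_⟩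
    · rw [hY _ fun h => hne (congrArg Prod.snd h)]
      simpa using (hasDerivAt_const s (0 : EuclideanSpace ℝ (Fin k))).prodMk
        (hasDerivAt_sqrt_one_sub_smul hz hs)
    · simp only [hhfun, norm_zero, norm_sqrt_smul_sq hpos.le]
      field_simp
      ring
  · exact (tendsto_const_nhds.prodMk_nhds (tendsto_sqrt_one_sub_smul_zero z)).mono_left
      nhdsWithin_le_nhds

/-- The explicit solution `y(s) = (0, (1 - 2s/‖z⁺‖²)^{1/2} z⁺)` of the rescaled standard
vector field `Y^{(k)}(x) = ‖x‖⁻²(x⁻, -x⁺)` starting at `(0, z⁺)`: it decreases `h_k` at unit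
speed and converges to the critical point `0` as `s → ‖z⁺‖²/2` from the left. -/
theorem stmt_12 (n k : ℕ) (hkn : k ≤ n)
    (z : EuclideanSpace ℝ (Fin (n - k))) (hz : z ≠ 0)
    (hfun : EuclideanSpace ℝ (Fin k) × EuclideanSpace ℝ (Fin (n - k)) → ℝ)
    (hhfun : ∀ x, hfun x = -‖x.1‖ ^ 2 / 2 + ‖x.2‖ ^ 2 / 2)
    (Y : EuclideanSpace ℝ (Fin k) × EuclideanSpace ℝ (Fin (n - k)) →
         EuclideanSpace ℝ (Fin k) × EuclideanSpace ℝ (Fin (n - k)))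
    (hY : ∀ x, x ≠ 0 → Y x = (‖x.1‖ ^ 2 + ‖x.2‖ ^ 2)⁻¹ • (x.1, -x.2))
    (y : ℝ → EuclideanSpace ℝ (Fin k) × EuclideanSpace ℝ (Fin (n - k)))
    (hy : ∀ s, y s = (0, Real.sqrt (1 - 2 * s / ‖z‖ ^ 2) • z)) :
    y 0 = (0, z) ∧
    (∀ s, 0 ≤ s → s < ‖z‖ ^ 2 / 2 →
      y s ≠ 0 ∧ HasDerivAt y (Y (y s)) s ∧ hfun (y s) = hfun (0, z) - s) ∧
    Filter.Tendsto y (nhdsWithin (‖z‖ ^ 2 / 2) (Set.Iio (‖z‖ ^ 2 / 2))) (nhds 0) :=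
  stmt_12_general n k z hz hfun hhfun Y hY y hy
end

section
/- Let M be a smooth (C^∞) finite-dimensional manifold without boundary (Hausdorff, second countable), let h : M → ℝ be smooth and proper, and let X be a smooth vector field on M for which there is a constant C with |d_x h(X(x))| ≤ C for all x ∈ M. Then X is complete: for every x ∈ M there exists an integral curve γ : ℝ → M of X with γ(0) = x. -/
/-!
Along an integral curve `γ` starting at `x`, the derivative of `h ∘ γ` is `d h (X)`, bounded by `C`;
so as long as `γ` is defined on `(-T, T)` it stays in the compact set
`h⁻¹ [h x - C T, h x + C T]`. Integral curves through the points of a compact set exist for a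
uniform time `ε`, so a bounded maximal symmetric interval of existence `(-T, T)` could be
extended to `(-(T + ε / 2), T + ε / 2)` by restarting the flow at `±(T - ε / 2)`.
-/

open Set Metric Function
open scoped Manifold Topology NNReal

namespace IsPicardLindelof

variable {E : Type*} [NormedAddCommGroup E] [NormedSpace ℝ E] [CompleteSpace E]
  {f : ℝ → E → E} {tmin tmax : ℝ} {t₀ : Icc tmin tmax} {x₀ x : E} {a r L K : ℝ≥0}

theorem exists_eq_forall_mem_Icc_hasDerivWithinAt_and_mem_closedBall
    (hf : IsPicardLindelof f t₀ x₀ a r L K) (hx : x ∈ closedBall x₀ r) :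
    ∃ α : ℝ → E, α t₀ = x ∧ ∀ t ∈ Icc tmin tmax,
      HasDerivWithinAt α (f t (α t)) (Icc tmin tmax) t ∧ α t ∈ closedBall x₀ a := by
  obtain ⟨α, hα⟩ := ODE.FunSpace.exists_isFixedPt_next hf hx
  refine ⟨α.compProj, by rw [ODE.FunSpace.compProj_val, ← hα, ODE.FunSpace.next_apply₀],
    fun t ht ↦ ⟨?_, α.compProj_mem_closedBall hf.mul_max_le⟩⟩
  apply ODE.hasDerivWithinAt_picard_Icc t₀.2 hf.continuousOn_uncurry
    α.continuous_compProj.continuousOn (fun _ _ ↦ α.compProj_mem_closedBall hf.mul_max_le)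
    x ht |>.congr_of_mem _ ht
  intro t' ht'
  nth_rw 1 [← hα]
  rw [ODE.FunSpace.compProj_of_mem ht', ODE.FunSpace.next_apply]

end IsPicardLindelof

theorem ContDiffAt.exists_forall_mem_closedBall_exists_eq_forall_mem_Ioo_hasDerivAt_and_mem
    {E : Type*} [NormedAddCommGroup E] [NormedSpace ℝ E] [CompleteSpace E]
    {f : E → E} {x₀ : E} (hf : ContDiffAt ℝ 1 f x₀) {s : Set E} (hs : s ∈ 𝓝 x₀) :
    ∃ r > (0 : ℝ), ∃ ε > (0 : ℝ), ∀ x ∈ closedBall x₀ r, ∃ α : ℝ → E, α 0 = x ∧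
      ∀ t ∈ Ioo (-ε) ε, HasDerivAt α (f (α t)) t ∧ α t ∈ s := by
  obtain ⟨ε, hε, a, r, L, K, hr, hpl⟩ := IsPicardLindelof.of_contDiffAt_one hf
  obtain ⟨ρ, hρ, hρs⟩ := nhds_basis_closedBall.mem_iff.1 hs
  have hra : (r : ℝ) ≤ a := by
    have hL : (0 : ℝ) ≤ L * max (0 + ε - 0) (0 - (0 - ε)) :=
      mul_nonneg L.2 (le_max_of_le_left (by linarith))
    linarith [(hpl 0).mul_max_le]
  set a' : ℝ≥0 := min a ⟨ρ, hρ.le⟩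
  have ha' : 0 < a' := lt_min (hr.trans_le (by exact_mod_cast hra)) hρ
  obtain ⟨ε', hε', hpl'⟩ := (hpl 0).exists_shrink_radius hε (min_le_left a _) (half_lt_self ha')
  refine ⟨a' / 2, by positivity, ε', hε', fun x hx ↦ ?_⟩
  obtain ⟨α, hα0, hα⟩ := hpl'.exists_eq_forall_mem_Icc_hasDerivWithinAt_and_mem_closedBall hx
  refine ⟨α, hα0, fun t ht ↦ ?_⟩
  have ht' : t ∈ Ioo (0 - ε') (0 + ε') := by simpa using ht
  obtain ⟨hderiv, hmem⟩ := hα t (Ioo_subset_Icc_self ht')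
  exact ⟨hderiv.hasDerivAt (Icc_mem_nhds ht'.1 ht'.2),
    hρs (closedBall_subset_closedBall (min_le_right a _) hmem)⟩

section IntegralCurve

variable {E : Type*} [NormedAddCommGroup E] [NormedSpace ℝ E]
  {H : Type*} [TopologicalSpace H] {I : ModelWithCorners ℝ E H}
  {M : Type*} [TopologicalSpace M] [ChartedSpace H M] [IsManifold I 1 M]
  {v : (x : M) → TangentSpace I x}

theorem isMIntegralCurveOn_extChartAt_symm_comp {x₀ : M} {f : ℝ → E} {s : Set ℝ}
    (hf : ∀ t ∈ s, f t ∈ interior (extChartAt I x₀).target ∧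
      HasDerivAt f (tangentCoordChange I ((extChartAt I x₀).symm (f t)) x₀
        ((extChartAt I x₀).symm (f t)) (v ((extChartAt I x₀).symm (f t)))) t) :
    IsMIntegralCurveOn ((extChartAt I x₀).symm ∘ f) v s := by
  intro t ht
  obtain ⟨hft, h⟩ := hf t ht
  set xₜ : M := (extChartAt I x₀).symm (f t)
  have hft' := interior_subset hft
  have hxₜ : xₜ ∈ (extChartAt I x₀).source := (extChartAt I x₀).map_target hft'
  have hxₜ' := mem_extChartAt_source (I := I) xₜ
  apply HasMFDerivAt.hasMFDerivWithinAt
  refine ⟨(continuousAt_extChartAt_symm'' hft').comp h.continuousAt,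
    @HasDerivWithinAt.hasFDerivWithinAt ℝ _ E _ _ _ _ _ _ (by exact inferInstance) _ ?_⟩
  simp only [mfld_simps]
  refine (?_ : HasDerivAt ((extChartAt I xₜ ∘ (extChartAt I x₀).symm) ∘ f) (v xₜ) t)
    |>.hasDerivWithinAt
  -- the chart velocity is the image of `v xₜ` under the coordinate change `xₜ → x₀`; undo it
  rw [← tangentCoordChange_self (I := I) (x := xₜ) (z := xₜ) (v := v xₜ) hxₜ',
    ← tangentCoordChange_comp (x := x₀) (v := (show E from v xₜ)) ⟨⟨hxₜ', hxₜ⟩, hxₜ'⟩]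
  apply HasFDerivAt.comp_hasDerivAt _ _ h
  apply HasFDerivWithinAt.hasFDerivAt (s := range I) _ <|
    mem_nhds_iff.mpr ⟨interior (extChartAt I x₀).target,
      interior_subset.trans (extChartAt_target_subset_range ..), isOpen_interior, hft⟩
  rw [← (extChartAt I x₀).right_inv hft']
  exact hasFDerivWithinAt_tangentCoordChange ⟨hxₜ, hxₜ'⟩

variable [BoundarylessManifold I M]

theorem IsMIntegralCurveOn.exists_extend [T2Space M] {γ γ' : ℝ → M} {a b t₀ ε : ℝ}
    (hv : CMDiff 1 (fun x ↦ (⟨x, v x⟩ : TangentBundle I M)))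
    (hγ : IsMIntegralCurveOn γ v (Ioo a b)) (ht₀ : t₀ ∈ Ioo a b) (hε : 0 < ε)
    (hγ' : IsMIntegralCurveOn γ' v (Ioo (-ε) ε)) (h : γ' 0 = γ t₀) :
    ∃ γ'' : ℝ → M, EqOn γ'' γ (Ioo a b) ∧
      IsMIntegralCurveOn γ'' v (Ioo (min a (t₀ - ε)) (max b (t₀ + ε))) := by
  have hshift : IsMIntegralCurveOn (γ' ∘ (· - t₀)) v (Ioo (t₀ - ε) (t₀ + ε)) :=
    (isMIntegralCurveOn_comp_sub.mpr hγ').mono fun t ht ↦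
      show t - t₀ ∈ Ioo (-ε) ε from ⟨by linarith [ht.1], by linarith [ht.2]⟩
  refine ⟨piecewise (Ioo a b) γ (γ' ∘ (· - t₀)), piecewise_eqOn _ _ _, ?_⟩
  rw [← Ioo_union_Ioo' (by linarith [ht₀.2]) (by linarith [ht₀.1])]
  exact isMIntegralCurveOn_piecewise hv hγ hshift
    ⟨ht₀, by constructor <;> linarith⟩ (by simp [h])

variable [CompleteSpace E]

theorem exists_pos_eventually_exists_isMIntegralCurveOn {x₀ : M}
    (hv : CMDiffAt 1 (fun x ↦ (⟨x, v x⟩ : TangentBundle I M)) x₀) :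
    ∃ ε > (0 : ℝ), ∀ᶠ y in 𝓝 x₀, ∃ γ : ℝ → M, γ 0 = y ∧ IsMIntegralCurveOn γ v (Ioo (-ε) ε) := by
  have hx : I.IsInteriorPoint x₀ := BoundarylessManifold.isInteriorPoint
  rw [contMDiffAt_iff] at hv
  obtain ⟨r, hr, ε, hε, H⟩ := (hv.2.contDiffAt (range_mem_nhds_isInteriorPoint hx)).snd
    |>.exists_forall_mem_closedBall_exists_eq_forall_mem_Ioo_hasDerivAt_and_mem
      (isOpen_interior.mem_nhds (I.isInteriorPoint_iff.mp hx))
  refine ⟨ε, hε, ?_⟩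
  filter_upwards [extChartAt_source_mem_nhds (I := I) x₀,
    continuousAt_extChartAt (I := I) x₀ (closedBall_mem_nhds _ hr)] with y hy hyr
  obtain ⟨α, hα0, hα⟩ := H _ hyr
  refine ⟨(extChartAt I x₀).symm ∘ α, by rw [comp_apply, hα0, (extChartAt I x₀).left_inv hy], ?_⟩
  refine isMIntegralCurveOn_extChartAt_symm_comp fun t ht ↦ ⟨(hα t ht).2, ?_⟩
  rw [tangentCoordChange_def]
  exact (hα t ht).1

theorem IsCompact.exists_pos_forall_exists_isMIntegralCurveOn {K : Set M} (hK : IsCompact K)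
    (hv : CMDiff 1 (fun x ↦ (⟨x, v x⟩ : TangentBundle I M))) :
    ∃ ε > (0 : ℝ), ∀ y ∈ K, ∃ γ : ℝ → M, γ 0 = y ∧ IsMIntegralCurveOn γ v (Ioo (-ε) ε) := by
  refine hK.induction_on ⟨1, one_pos, by simp⟩ (fun _ _ hst ⟨ε, hε, h⟩ ↦ ⟨ε, hε, fun y hy ↦
    h y (hst hy)⟩) (fun _ _ ⟨ε, hε, hs⟩ ⟨ε', hε', ht⟩ ↦ ⟨min ε ε', lt_min hε hε', ?_⟩) ?_
  · rintro y (hy | hy)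
    · obtain ⟨γ, hγ0, hγ⟩ := hs y hy
      exact ⟨γ, hγ0, hγ.mono (Ioo_subset_Ioo (neg_le_neg (min_le_left _ _)) (min_le_left _ _))⟩
    · obtain ⟨γ, hγ0, hγ⟩ := ht y hy
      exact ⟨γ, hγ0, hγ.mono (Ioo_subset_Ioo (neg_le_neg (min_le_right _ _)) (min_le_right _ _))⟩
  · intro x _
    obtain ⟨ε, hε, h⟩ := exists_pos_eventually_exists_isMIntegralCurveOn (hv x)
    exact ⟨_, mem_nhdsWithin_of_mem_nhds h, ε, hε, fun _ hy ↦ hy⟩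

theorem exists_isMIntegralCurve_of_forall_mapsTo_isCompact [T2Space M]
    (hv : CMDiff 1 (fun x ↦ (⟨x, v x⟩ : TangentBundle I M))) (x : M)
    (hK : ∀ T : ℝ, ∃ K : Set M, IsCompact K ∧ ∀ (γ : ℝ → M) (a : ℝ), a ≤ T → γ 0 = x →
      IsMIntegralCurveOn γ v (Ioo (-a) a) → MapsTo γ (Ioo (-a) a) K) :
    ∃ γ : ℝ → M, γ 0 = x ∧ IsMIntegralCurve γ v := by
  set s := {a : ℝ | ∃ γ : ℝ → M, γ 0 = x ∧ IsMIntegralCurveOn γ v (Ioo (-a) a)}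
  suffices hs : ¬BddAbove s by
    rw [exists_isMIntegralCurve_iff_exists_isMIntegralCurveOn_Ioo hv]
    intro a
    obtain ⟨b, ⟨γ, hγ0, hγ⟩, hab⟩ := not_bddAbove_iff.mp hs a
    exact ⟨γ, hγ0, hγ.mono (Ioo_subset_Ioo (neg_le_neg hab.le) hab.le)⟩
  intro hs
  set T := sSup s
  obtain ⟨K, hKc, hKγ⟩ := hK T
  obtain ⟨ε, hε, hflow⟩ := (hKc.insert x).exists_pos_forall_exists_isMIntegralCurveOn hv
  have hεT : ε ≤ T := le_csSup hs (hflow x (mem_insert x K))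
  -- restart the flow from `γ (±b)` with `b := T - ε / 2`, which reaches time `T + ε / 2`
  obtain ⟨a, ⟨γ, hγ0, hγ⟩, hba⟩ := exists_lt_of_lt_csSup ⟨ε, hflow x (mem_insert x K)⟩
    (by linarith : T - ε / 2 < T)
  have haT : a ≤ T := le_csSup hs ⟨γ, hγ0, hγ⟩
  have hb : T - ε / 2 ∈ Ioo (-a) a := ⟨by linarith, hba⟩
  have hb' : -(T - ε / 2) ∈ Ioo (-a) a := ⟨by linarith, by linarith⟩
  obtain ⟨γ₁, hγ₁0, hγ₁⟩ := hflow _ (mem_insert_of_mem x (hKγ γ a haT hγ0 hγ hb))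
  obtain ⟨γ', hγ'γ, hγ'⟩ := hγ.exists_extend hv hb hε hγ₁ hγ₁0
  obtain ⟨γ₂, hγ₂0, hγ₂⟩ := hflow _ (mem_insert_of_mem x (hKγ γ a haT hγ0 hγ hb'))
  obtain ⟨γ'', hγ''γ', hγ''⟩ := hγ'.exists_extend hv
    (Ioo_subset_Ioo (min_le_left _ _) (le_max_left _ _) hb') hε hγ₂ (by rw [hγ₂0, hγ'γ hb'])
  have h0 : (0 : ℝ) ∈ Ioo (-a) a := ⟨by linarith, by linarith⟩
  have hT : T + ε / 2 ∈ s := by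
    refine ⟨γ'', ?_, hγ''.mono (Ioo_subset_Ioo ?_ ?_)⟩
    · rw [hγ''γ' (Ioo_subset_Ioo (min_le_left _ _) (le_max_left _ _) h0), hγ'γ h0, hγ0]
    · exact (min_le_right _ _).trans (by linarith)
    · exact le_max_of_le_left (le_max_of_le_right (by linarith))
  linarith [le_csSup hs hT]

end IntegralCurve

section

variable {E : Type*} [NormedAddCommGroup E] [NormedSpace ℝ E]
  {H : Type*} [TopologicalSpace H] {I : ModelWithCorners ℝ E H}
  {M : Type*} [TopologicalSpace M] [ChartedSpace H M]
  {v : (x : M) → TangentSpace I x} {γ : ℝ → M} {f : M → ℝ}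

theorem IsMIntegralCurveOn.hasDerivAt_comp {s : Set ℝ} {t : ℝ} (hγ : IsMIntegralCurveOn γ v s)
    (hs : s ∈ 𝓝 t) (hf : MDiffAt f (γ t)) :
    HasDerivAt (f ∘ γ) (mfderiv I 𝓘(ℝ, ℝ) f (γ t) (v (γ t))) t := by
  have h := hf.hasMFDerivAt.comp t ((hγ t (mem_of_mem_nhds hs)).hasMFDerivAt hs)
  rw [hasMFDerivAt_iff_hasFDerivAt] at h
  have h' : HasDerivAt (f ∘ γ) (mfderiv I 𝓘(ℝ, ℝ) f (γ t) ((1 : ℝ) • v (γ t))) t :=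
    @HasFDerivAt.hasDerivAt ℝ _ ℝ _ _ _ _ _ (by exact (inferInstance : ContinuousSMul ℝ ℝ)) _ h
  rwa [one_smul] at h'

theorem IsMIntegralCurveOn.abs_sub_le_mul {a b s t C : ℝ}
    (hγ : IsMIntegralCurveOn γ v (Ioo a b)) (hf : MDiff f)
    (hC : ∀ x, |show ℝ from mfderiv I 𝓘(ℝ, ℝ) f x (v x)| ≤ C) (hs : s ∈ Ioo a b)
    (ht : t ∈ Ioo a b) :
    |f (γ t) - f (γ s)| ≤ C * |t - s| :=
  (convex_Ioo a b).norm_image_sub_le_of_norm_hasDerivWithin_le (f := f ∘ γ)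
    (fun _ hu ↦ (hγ.hasDerivAt_comp (Ioo_mem_nhds hu.1 hu.2) (hf _)).hasDerivWithinAt)
    (fun _ _ ↦ hC _) hs ht

end

theorem stmt_13_general {d : ℕ} {M : Type*} [TopologicalSpace M] [T2Space M]
    [ChartedSpace (EuclideanSpace ℝ (Fin d)) M]
    [IsManifold (𝓡 d) (⊤ : ℕ∞) M]
    (h : M → ℝ) (hh : ContMDiff (𝓡 d) 𝓘(ℝ, ℝ) (⊤ : ℕ∞) h)
    (hproper : ∀ K : Set ℝ, IsCompact K → IsCompact (h ⁻¹' K))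
    (X : (x : M) → TangentSpace (𝓡 d) x)
    (hX : ContMDiff (𝓡 d) (𝓡 d).tangent (⊤ : ℕ∞)
      (fun x => (⟨x, X x⟩ : TangentBundle (𝓡 d) M)))
    (C : ℝ) (hC : ∀ x : M, |show ℝ from mfderiv (𝓡 d) 𝓘(ℝ, ℝ) h x (X x)| ≤ C) :
    ∀ x : M, ∃ γ : ℝ → M, γ 0 = x ∧ IsMIntegralCurve γ X := by
  intro x
  have hC0 : 0 ≤ C := (abs_nonneg _).trans (hC x)
  refine exists_isMIntegralCurve_of_forall_mapsTo_isCompact (hX.of_le (by norm_cast)) x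
    fun T ↦ ⟨h ⁻¹' Icc (h x - C * T) (h x + C * T), hproper _ isCompact_Icc, ?_⟩
  rintro γ a haT rfl hγ t ht
  have ha : 0 < a := by linarith [ht.1, ht.2]
  have hbound : |h (γ t) - h (γ 0)| ≤ C * T :=
    calc |h (γ t) - h (γ 0)|
      _ ≤ C * |t - 0| :=
        hγ.abs_sub_le_mul (hh.mdifferentiable (by simp)) hC ⟨neg_lt_zero.mpr ha, ha⟩ ht
      _ ≤ C * T := by
        rw [sub_zero]
        exact mul_le_mul_of_nonneg_left ((abs_lt.mpr ⟨ht.1, ht.2⟩).le.trans haT) hC0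
  obtain ⟨hlow, hup⟩ := abs_le.mp hbound
  exact ⟨by linarith, by linarith⟩

/-- A smooth vector field `X` on a manifold carrying a proper smooth function `h` with
`|d_x h (X x)|` uniformly bounded is complete: through every point there is an integral
curve defined on all of `ℝ`. -/
theorem stmt_13 {d : ℕ} {M : Type*} [TopologicalSpace M] [T2Space M]
    [SecondCountableTopology M]
    [ChartedSpace (EuclideanSpace ℝ (Fin d)) M]
    [IsManifold (𝓡 d) (⊤ : ℕ∞) M]
    (h : M → ℝ) (hh : ContMDiff (𝓡 d) 𝓘(ℝ, ℝ) (⊤ : ℕ∞) h)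
    (hproper : ∀ K : Set ℝ, IsCompact K → IsCompact (h ⁻¹' K))
    (X : (x : M) → TangentSpace (𝓡 d) x)
    (hX : ContMDiff (𝓡 d) (𝓡 d).tangent (⊤ : ℕ∞)
      (fun x => (⟨x, X x⟩ : TangentBundle (𝓡 d) M)))
    (C : ℝ) (hC : ∀ x : M, |show ℝ from mfderiv (𝓡 d) 𝓘(ℝ, ℝ) h x (X x)| ≤ C) :
    ∀ x : M, ∃ γ : ℝ → M, γ 0 = x ∧ IsMIntegralCurve γ X :=
  stmt_13_general h hh hproper X hX C hC
end

section
/- Let M be a compact smooth (C^∞) finite-dimensional manifold without boundary (Hausdorff, second countable), let X be a smooth vector field on M, let h : M → ℝ be a smooth function with d_x h(X(x)) < 0 for every x with X(x) ≠ 0, and let γ : ℝ → M be an integral curve of X. Then every accumulation point of γ(t) as t → +∞, i.e. every point of ⋂_{T ∈ ℝ} closure(γ([T, ∞))), is a zero of X; the same holds for accumulation points as t → −∞. -/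
/-!
Along an integral curve `γ` the function `h` has derivative `dh(X) ≤ 0`, so `h ∘ γ` is
antitone, and it is bounded because `M` is compact. If `X y ≠ 0`, then `dh(X) < -c < 0` on a
neighbourhood `U` of `y`. Working in a chart at `y`, where the coordinates of `X` are bounded,
there are a smaller neighbourhood `N` and a time `ε > 0` such that a curve that enters `N` stays
in `U` for time `ε`, so each visit to `N` lowers `h` by at least `c ε`. A point of the `ω`-limit
set is visited at arbitrarily late times, which is incompatible with `h ∘ γ` being bounded below.
The `α`-limit case is the `ω`-limit case for `t ↦ γ (-t)`, `-X` and `-h`.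
-/

open scoped Manifold Topology
open Set Metric

theorem Icc_subset_of_hasDerivAt_of_norm_le {E : Type*} [NormedAddCommGroup E]
    [NormedSpace ℝ E] {f f' : ℝ → E} {C : Set ℝ} {r V a : ℝ} (hC : IsClosed C)
    (hnhds : ∀ t ∈ C, f t ∈ ball (f a) r → C ∈ 𝓝 t)
    (hf : ∀ t ∈ C, HasDerivAt f (f' t) t) (hf' : ∀ t ∈ C, ‖f' t‖ ≤ V) (ha : a ∈ C) :
    Icc a (a + r / V) ⊆ C := by
  -- continuous induction: before time `a + r / V` the speed bound keeps `f` in `ball (f a) r`,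
  -- where `C` is a neighbourhood
  set s := {t ∈ C | ‖f t - f a‖ ≤ V * (t - a)}
  have hs : IsClosed (s ∩ Icc a (a + r / V)) := by
    have hcont : ContinuousOn (fun t => ‖f t - f a‖ - V * (t - a)) C := fun t ht =>
      (((hf t ht).continuousAt.sub continuousAt_const).norm.sub
        (continuousAt_const.mul (continuousAt_id.sub continuousAt_const))).continuousWithinAt
    refine IsClosed.inter ?_ isClosed_Icc
    convert hcont.preimage_isClosed_of_isClosed hC (isClosed_Iic (a := 0)) using 1
    ext t
    simp [s]
  refine fun t ht => (hs.Icc_subset_of_forall_mem_nhdsWithin ⟨ha, by simp⟩ ?_ ht).1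
  rintro x ⟨⟨hxC, hxa⟩, hx⟩
  have hV : 0 < V := ((norm_nonneg _).trans (hf' a ha)).lt_of_ne <| by
    rintro rfl
    rw [div_zero, add_zero] at hx
    linarith [hx.1, hx.2]
  have hxr : f x ∈ ball (f a) r := by
    rw [mem_ball, dist_eq_norm]
    exact hxa.trans_lt ((lt_div_iff₀' hV).mp (by linarith [hx.2]))
  obtain ⟨δ, hδ, hδC⟩ := Metric.mem_nhds_iff.mp (hnhds x hxC hxr)
  have hIcc : Icc x (x + δ / 2) ⊆ C := fun t ht => hδC <| by
    rw [mem_ball, Real.dist_eq, abs_lt]; constructor <;> linarith [ht.1, ht.2]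
  filter_upwards [Ioo_mem_nhdsGT (by linarith : x < x + δ / 2)] with t ht
  have hmvt := norm_image_sub_le_of_norm_deriv_le_segment'
    (fun u hu => (hf u (hIcc (Icc_subset_Icc_right ht.2.le hu))).hasDerivWithinAt)
    (fun u hu => hf' u (hIcc (Icc_subset_Icc_right ht.2.le (Ico_subset_Icc_self hu))))
    t (right_mem_Icc.mpr ht.1.le)
  refine ⟨hIcc ⟨ht.1.le, ht.2.le⟩, ?_⟩
  calc ‖f t - f a‖ ≤ ‖f t - f x‖ + ‖f x - f a‖ := norm_sub_le_norm_sub_add_norm_sub _ _ _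
    _ ≤ V * (t - x) + V * (x - a) := add_le_add hmvt hxa
    _ = V * (t - a) := by ring

theorem notMem_iInter_closure_image_Ici_of_antitone {α : Type*} [TopologicalSpace α]
    {γ : ℝ → α} {u : ℝ → ℝ} (hu : Antitone u) (hbdd : BddBelow (range u)) {y : α} {N : Set α}
    (hN : N ∈ 𝓝 y) {ε δ : ℝ} (hδ : 0 < δ) (hdrop : ∀ s, γ s ∈ N → u (s + ε) ≤ u s - δ) :
    y ∉ ⋂ T, closure (γ '' Ici T) := by
  intro hy
  obtain ⟨T, hT⟩ := exists_lt_of_ciInf_lt (lt_add_of_pos_right (⨅ t, u t) hδ)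
  obtain ⟨_, hsN, s, hs, rfl⟩ := mem_closure_iff_nhds.mp (mem_iInter.mp hy T) N hN
  linarith [hdrop s hsN, hu (mem_Ici.mp hs), ciInf_le hbdd (s + ε)]

section IntegralCurve

variable {E : Type*} [NormedAddCommGroup E] [NormedSpace ℝ E] {H : Type*} [TopologicalSpace H]
  {I : ModelWithCorners ℝ E H} {M : Type*} [TopologicalSpace M] [ChartedSpace H M]
  {X : (x : M) → TangentSpace I x} {γ : ℝ → M}

theorem IsMIntegralCurve.hasDerivAt_comp_s15 {F : Type*} [NormedAddCommGroup F] [NormedSpace ℝ F]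
    (hγ : IsMIntegralCurve γ X) {f : M → F} {t : ℝ} {f' : TangentSpace I (γ t) →L[ℝ] F}
    (hf : HasMFDerivAt I 𝓘(ℝ, F) f (γ t) f') :
    HasDerivAt (f ∘ γ) (f' (X (γ t))) t := by
  have hcomp : HasFDerivAt (f ∘ γ) (f'.comp ((1 : ℝ →L[ℝ] ℝ).smulRight (X (γ t)))) t :=
    (hf.comp t (hγ t)).hasFDerivAt
  simpa using hcomp.hasDerivAt

variable [IsManifold I 1 M]

theorem IsMIntegralCurve.hasDerivAt_extChartAt_comp (hγ : IsMIntegralCurve γ X) {y : M} {t : ℝ}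
    (ht : γ t ∈ (chartAt H y).source) :
    HasDerivAt (extChartAt I y ∘ γ) (tangentCoordChange I (γ t) y (γ t) (X (γ t))) t := by
  have hderiv := hγ.hasDerivAt_comp_s15 (hasMFDerivAt_extChartAt (I := I) ht)
  rwa [mfderiv_chartAt_eq_tangentCoordChange ht] at hderiv

theorem continuous_mfderiv_apply (hX : Continuous fun x => (⟨x, X x⟩ : TangentBundle I M))
    {f : M → ℝ} (hf : ContMDiff I 𝓘(ℝ, ℝ) 1 f) :
    Continuous fun x => mfderiv I 𝓘(ℝ, ℝ) f x (X x) :=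
  continuous_snd.comp ((tangentBundleModelSpaceHomeomorph 𝓘(ℝ, ℝ)).continuous.comp
    ((hf.continuous_tangentMap le_rfl).comp hX))

theorem continuousOn_tangentCoordChange_apply
    (hX : Continuous fun x => (⟨x, X x⟩ : TangentBundle I M)) (y : M) :
    ContinuousOn (fun x => tangentCoordChange I x y x (X x)) (chartAt H y).source :=
  continuous_snd.comp_continuousOn <|
    (trivializationAt E (TangentSpace I) y).continuousOn.comp hX.continuousOn
      fun x hx => by simpa using hx

theorem continuous_neg_section (hX : Continuous fun x => (⟨x, X x⟩ : TangentBundle I M)) :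
    Continuous fun x => (⟨x, -X x⟩ : TangentBundle I M) :=
  contMDiff_zero_iff.mp
    (-(⟨X, contMDiff_zero_iff.mpr hX⟩ : ContMDiffSection I E 0 (TangentSpace I))).contMDiff

variable [FiniteDimensional ℝ E] [I.Boundaryless] [T2Space M]

theorem exists_mem_nhds_forall_isMIntegralCurve_mapsTo_Icc
    (hX : Continuous fun x => (⟨x, X x⟩ : TangentBundle I M)) {y : M} {U : Set M}
    (hU : U ∈ 𝓝 y) :
    ∃ N ∈ 𝓝 y, ∃ ε > 0, ∀ γ : ℝ → M, IsMIntegralCurve γ X →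
      ∀ s, γ s ∈ N → MapsTo γ (Icc s (s + ε)) U := by
  set φ := extChartAt I y
  obtain ⟨ρ, hρ, hK⟩ := nhds_basis_closedBall.mem_iff.mp <|
    Filter.inter_mem (extChartAt_target_mem_nhds (I := I) y) (extChartAt_preimage_mem_nhds hU)
  set S := φ.symm '' closedBall (φ y) ρ
  have hS : IsCompact S := (isCompact_closedBall _ _).image_of_continuousOn
    ((continuousOn_extChartAt_symm y).mono fun w hw => (hK hw).1)
  have hS_source : S ⊆ φ.source := by
    rintro _ ⟨w, hw, rfl⟩
    exact φ.map_target (hK hw).1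
  have hSU : S ⊆ U := by
    rintro _ ⟨w, hw, rfl⟩
    exact (hK hw).2
  have mem_S : ∀ x ∈ φ.source, φ x ∈ closedBall (φ y) ρ → x ∈ S :=
    fun x hx hφx => ⟨φ x, hφx, φ.left_inv hx⟩
  obtain ⟨B, hB⟩ := hS.exists_bound_of_continuousOn
    ((continuousOn_tangentCoordChange_apply hX y).mono (extChartAt_source I y ▸ hS_source))
  refine ⟨φ.source ∩ φ ⁻¹' ball (φ y) (ρ / 2),
    (isOpen_extChartAt_preimage' y isOpen_ball).mem_nhds
      ⟨mem_extChartAt_source y, mem_ball_self (by positivity)⟩,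
    ρ / 2 / max B 1, by positivity, fun γ hγ s hs => ?_⟩
  have hsS : γ s ∈ S := mem_S _ hs.1 (ball_subset_closedBall.trans
    (closedBall_subset_closedBall (by linarith)) hs.2)
  have hball : ball (φ (γ s)) (ρ / 2) ⊆ ball (φ y) ρ :=
    ball_subset_ball' (by linarith [mem_ball.mp hs.2])
  have hC := Icc_subset_of_hasDerivAt_of_norm_le (f := φ ∘ γ) (r := ρ / 2)
    (hS.isClosed.preimage hγ.continuous)
    (fun t ht hft => Filter.mem_of_superset (hγ.continuous.continuousAt.preimage_mem_nhds
      ((isOpen_extChartAt_preimage' y isOpen_ball).mem_nhds ⟨hS_source ht, hball hft⟩))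
      fun u hu => mem_S _ hu.1 (ball_subset_closedBall hu.2))
    (fun t ht => hγ.hasDerivAt_extChartAt_comp (extChartAt_source I y ▸ hS_source ht))
    (fun t ht => (hB _ ht).trans (le_max_left B 1)) hsS
  exact fun t ht => hSU (hC ht)

theorem IsMIntegralCurve.eq_zero_of_mem_iInter_closure_image_Ici
    (hX : Continuous fun x => (⟨x, X x⟩ : TangentBundle I M)) {h : M → ℝ}
    (hh : ContMDiff I 𝓘(ℝ, ℝ) 1 h)
    (hlyap : ∀ x, X x ≠ 0 → (show ℝ from mfderiv I 𝓘(ℝ, ℝ) h x (X x)) < 0)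
    (hγ : IsMIntegralCurve γ X) (hbdd : BddBelow (range (h ∘ γ))) {y : M}
    (hy : y ∈ ⋂ T, closure (γ '' Ici T)) : X y = 0 := by
  by_contra hXy
  set g : M → ℝ := fun x => mfderiv I 𝓘(ℝ, ℝ) h x (X x)
  have hg_nonpos : ∀ x, g x ≤ 0 := fun x => by
    by_cases hx : X x = 0
    · simp only [g, hx, map_zero]
      exact le_rfl
    · exact (hlyap x hx).le
  have hderiv : ∀ t, HasDerivAt (h ∘ γ) (g (γ t)) t :=
    fun t => hγ.hasDerivAt_comp_s15 (hh.mdifferentiableAt one_ne_zero).hasMFDerivAt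
  have hgy : g y < g y / 2 := by linarith [hlyap y hXy]
  obtain ⟨N, hN, ε, hε, hstay⟩ := exists_mem_nhds_forall_isMIntegralCurve_mapsTo_Icc hX
    ((continuous_mfderiv_apply hX hh).continuousAt.preimage_mem_nhds (Iio_mem_nhds hgy))
  refine notMem_iInter_closure_image_Ici_of_antitone (ε := ε)
    (antitone_of_hasDerivAt_nonpos hderiv fun t => hg_nonpos _) hbdd hN
    (by nlinarith [hlyap y hXy] : 0 < -(g y / 2) * ε) (fun s hs => ?_) hy
  obtain ⟨c, hc, hslope⟩ := exists_hasDerivAt_eq_slope (h ∘ γ) (fun t => g (γ t))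
    (by linarith : s < s + ε) (fun t _ => (hderiv t).continuousAt.continuousWithinAt)
    (fun t _ => hderiv t)
  have hgc : g (γ c) < g y / 2 := hstay γ hγ s hs (Ioo_subset_Icc_self hc)
  rw [add_sub_cancel_left, eq_div_iff hε.ne'] at hslope
  simp only [Function.comp_apply] at hslope ⊢
  linarith [mul_lt_mul_of_pos_right hgc hε]

theorem IsMIntegralCurve.eq_zero_of_mem_iInter_closure_image_Iic
    (hX : Continuous fun x => (⟨x, X x⟩ : TangentBundle I M)) {h : M → ℝ}
    (hh : ContMDiff I 𝓘(ℝ, ℝ) 1 h)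
    (hlyap : ∀ x, X x ≠ 0 → (show ℝ from mfderiv I 𝓘(ℝ, ℝ) h x (X x)) < 0)
    (hγ : IsMIntegralCurve γ X) (hbdd : BddAbove (range (h ∘ γ))) {y : M}
    (hy : y ∈ ⋂ T, closure (γ '' Iic T)) : X y = 0 := by
  have hγ' : IsMIntegralCurve (γ ∘ (· * -1)) (-X) := by
    convert hγ.comp_mul (-1) using 1
    ext x
    simp
  have hlyap' : ∀ x, -X x ≠ 0 → (show ℝ from mfderiv I 𝓘(ℝ, ℝ) (-h) x (-X x)) < 0 := by
    intro x hx
    rw [mfderiv_neg]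
    -- `TangentSpace 𝓘(ℝ, ℝ) _` carries no order, hence the explicit `ℝ`
    show @LT.lt ℝ _ (-(mfderiv I 𝓘(ℝ, ℝ) h x (-X x))) 0
    rw [map_neg, neg_neg]
    exact hlyap x (neg_ne_zero.mp hx)
  have hbdd' : BddBelow (range ((-h) ∘ γ ∘ (· * -1))) := by
    obtain ⟨b, hb⟩ := hbdd
    exact ⟨-b, by rintro _ ⟨t, rfl⟩; simpa using hb ⟨t * -1, rfl⟩⟩
  have hy' : y ∈ ⋂ T, closure ((γ ∘ (· * -1)) '' Ici T) := by
    refine mem_iInter.mpr fun T => ?_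
    rw [image_comp, show (· * -1) '' Ici T = Iic (-T) by simp]
    exact mem_iInter.mp hy (-T)
  exact neg_eq_zero.mp <| hγ'.eq_zero_of_mem_iInter_closure_image_Ici (continuous_neg_section hX)
    hh.neg hlyap' hbdd' hy'

end IntegralCurve

theorem stmt_15_general {d : ℕ} {M : Type*} [TopologicalSpace M] [T2Space M]
    [CompactSpace M]
    [ChartedSpace (EuclideanSpace ℝ (Fin d)) M]
    [IsManifold (𝓡 d) (⊤ : ℕ∞) M]
    (X : (x : M) → TangentSpace (𝓡 d) x)
    (hX : ContMDiff (𝓡 d) (𝓡 d).tangent (⊤ : ℕ∞)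
      (fun x => (⟨x, X x⟩ : TangentBundle (𝓡 d) M)))
    (h : M → ℝ) (hh : ContMDiff (𝓡 d) 𝓘(ℝ, ℝ) (⊤ : ℕ∞) h)
    (hlyap : ∀ x : M, X x ≠ 0 → (show ℝ from mfderiv (𝓡 d) 𝓘(ℝ, ℝ) h x (X x)) < 0)
    (γ : ℝ → M) (hγ : IsMIntegralCurve γ X) :
    (∀ y ∈ ⋂ T : ℝ, closure (γ '' Set.Ici T), X y = 0) ∧
    (∀ y ∈ ⋂ T : ℝ, closure (γ '' Set.Iic T), X y = 0) := by
  have hh₁ : ContMDiff (𝓡 d) 𝓘(ℝ, ℝ) 1 h := hh.of_le (by exact_mod_cast le_top)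
  have hrange : range (h ∘ γ) ⊆ range h := range_comp_subset_range γ h
  have hcpt : IsCompact (range h) := isCompact_range hh.continuous
  exact ⟨fun y => hγ.eq_zero_of_mem_iInter_closure_image_Ici hX.continuous hh₁ hlyap
      (hcpt.bddBelow.mono hrange),
    fun y => hγ.eq_zero_of_mem_iInter_closure_image_Iic hX.continuous hh₁ hlyap
      (hcpt.bddAbove.mono hrange)⟩

/-- On a closed manifold with a strict Lyapunov function, every accumulation point of an
integral curve as `t → +∞` (i.e. every point of its ω-limit set) is a zero of the vector
field; the same holds as `t → -∞`. -/
theorem stmt_15 {d : ℕ} {M : Type*} [TopologicalSpace M] [T2Space M]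
    [SecondCountableTopology M] [CompactSpace M]
    [ChartedSpace (EuclideanSpace ℝ (Fin d)) M]
    [IsManifold (𝓡 d) (⊤ : ℕ∞) M]
    (X : (x : M) → TangentSpace (𝓡 d) x)
    (hX : ContMDiff (𝓡 d) (𝓡 d).tangent (⊤ : ℕ∞)
      (fun x => (⟨x, X x⟩ : TangentBundle (𝓡 d) M)))
    (h : M → ℝ) (hh : ContMDiff (𝓡 d) 𝓘(ℝ, ℝ) (⊤ : ℕ∞) h)
    (hlyap : ∀ x : M, X x ≠ 0 → (show ℝ from mfderiv (𝓡 d) 𝓘(ℝ, ℝ) h x (X x)) < 0)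
    (γ : ℝ → M) (hγ : IsMIntegralCurve γ X) :
    (∀ y ∈ ⋂ T : ℝ, closure (γ '' Set.Ici T), X y = 0) ∧
    (∀ y ∈ ⋂ T : ℝ, closure (γ '' Set.Iic T), X y = 0) :=
  stmt_15_general X hX h hh hlyap γ hγ
end
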